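/- arXiv:math/0305200 — 5 statements merged into one kernel-verified Lean document; each statement's English description precedes it below -/
import Mathlib

section
/- Let η ∈ ℝ^{c₂} be a positive vector with 1 < c₁ < c₂ satisfying η_{⌊q/c₂⌋} η_{q mod c₂} = η_{⌊q/c₁⌋} η_{q mod c₁} for all 0 ≤ q < c₁c₂ (component identification ξ_α = η_α for α < c₁). Then for any β < c₂ with base-c₁ expansion β = α_0 + α_1 c₁ + ... + α_k c₁^k, 0 ≤ α_i < c₁, one has η_β / η_0 = ∏_{i=0}^{k} (η_{α_i} / η_0). -/
/-- Relation (6) of Molchan's paper: under relation (4), η is reconstructed from its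
first c₁ coordinates via base-c₁ digits. -/
theorem stmt_3 (c₁ c₂ : ℕ) (hc₁ : 1 < c₁) (hc₁₂ : c₁ < c₂)
    (η : ℕ → ℝ) (hηpos : ∀ j < c₂, 0 < η j)
    (hcomm : ∀ q < c₁ * c₂, η (q / c₂) * η (q % c₂) = η (q / c₁) * η (q % c₁)) :
    ∀ (k : ℕ) (α : ℕ → ℕ) (β : ℕ), (∀ i ≤ k, α i < c₁) →
      β = ∑ i ∈ Finset.range (k + 1), α i * c₁ ^ i → β < c₂ →
      η β / η 0 = ∏ i ∈ Finset.range (k + 1), (η (α i) / η 0) := by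
  intro k
  induction k with
  | zero =>
    intro α β hα hβ hβc₂
    simp only [zero_add, Finset.sum_range_one, Finset.prod_range_one, pow_zero, mul_one] at hβ ⊢
    simp [hβ]
  | succ k ih =>
    intro α β hα hβ hβc₂
    set β' := ∑ i ∈ Finset.range (k + 1), α (i + 1) * c₁ ^ i with hβ'def
    have hc₁pos : 0 < c₁ := by omega
    have hβeq : β = α 0 + β' * c₁ := by
      rw [hβ, Finset.sum_range_succ']
      have : ∑ i ∈ Finset.range (k + 1), α (i + 1) * c₁ ^ (i + 1) = β' * c₁ := by
        rw [hβ'def, Finset.sum_mul]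
        apply Finset.sum_congr rfl
        intro i _; ring
      rw [this]; ring
    have hβ'le : β' ≤ β := by
      have : β' * 1 ≤ β' * c₁ := Nat.mul_le_mul_left _ (by omega)
      omega
    have hβ'c₂ : β' < c₂ := lt_of_le_of_lt hβ'le hβc₂
    have hα0 : α 0 < c₁ := hα 0 (by omega)
    have hdiv : β / c₁ = β' := by
      rw [hβeq, Nat.add_mul_div_right _ _ hc₁pos, Nat.div_eq_of_lt hα0, Nat.zero_add]
    have hmod : β % c₁ = α 0 := by
      rw [hβeq, Nat.add_mul_mod_self_right, Nat.mod_eq_of_lt hα0]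
    have hq := hcomm β (by
      calc β < c₂ := hβc₂
        _ ≤ c₁ * c₂ := Nat.le_mul_of_pos_left _ hc₁pos)
    rw [Nat.div_eq_of_lt hβc₂, Nat.mod_eq_of_lt hβc₂, hdiv, hmod] at hq
    have hih := ih (fun i => α (i + 1)) β' (fun i hi => hα (i + 1) (by omega)) rfl hβ'c₂
    rw [Finset.prod_range_succ', ← hih]
    have h0 : 0 < η 0 := hηpos 0 (by omega)
    have hβpos : 0 < η β := hηpos β hβc₂
    have hβ'pos : 0 < η β' := hηpos β' hβ'c₂
    have hα0pos : 0 < η (α 0) := hηpos (α 0) (by omega)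
    field_simp
    nlinarith [hq, h0.ne', mul_pos h0 h0]
end

section
/- If positive integers c₁, c₂ > 1 have the property that the ratio log c₁ / log c₂ is rational, then there exist a positive integer p and positive integers k₁, k₂ such that c₁ = p^{k₁} and c₂ = p^{k₂}. -/
/-- If log c₁ / log c₂ is rational for integers c₁, c₂ > 1, then c₁ and c₂ are
powers of a common integer p. -/
theorem stmt_5 (c₁ c₂ : ℕ) (hc₁ : 1 < c₁) (hc₂ : 1 < c₂)
    (hrat : ∃ q : ℚ, Real.log c₁ / Real.log c₂ = (q : ℝ)) :
    ∃ p k₁ k₂ : ℕ, 0 < p ∧ 0 < k₁ ∧ 0 < k₂ ∧ c₁ = p ^ k₁ ∧ c₂ = p ^ k₂ := by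
  obtain ⟨q, hq⟩ := hrat
  have hl1 : (0:ℝ) < Real.log c₁ := Real.log_pos (by exact_mod_cast hc₁)
  have hl2 : (0:ℝ) < Real.log c₂ := Real.log_pos (by exact_mod_cast hc₂)
  have hq' : Real.log c₁ = q * Real.log c₂ := by
    field_simp at hq; linarith [hq]
  have hqpos : (0:ℝ) < (q:ℝ) := by
    by_contra h
    push_neg at h
    nlinarith
  have hqpos' : 0 < q := by exact_mod_cast hqpos
  set m : ℕ := q.num.toNat with hm
  set n : ℕ := q.den with hn
  have hm0 : 0 < m := by
    have := Rat.num_pos.mpr hqpos'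
    omega
  have hn0 : 0 < n := q.pos
  have hqmn : (q:ℝ) = (m:ℝ) / (n:ℝ) := by
    rw [Rat.cast_def]
    congr 1
    · have h := Int.toNat_of_nonneg (Rat.num_pos.mpr hqpos').le
      exact_mod_cast h.symm
  -- n * log c₁ = m * log c₂
  have key : (c₁:ℝ) ^ n = (c₂:ℝ) ^ m := by
    have h1 : (n:ℝ) * Real.log c₁ = (m:ℝ) * Real.log c₂ := by
      rw [hq', hqmn]
      field_simp
    have h2 : Real.log ((c₁:ℝ) ^ n) = Real.log ((c₂:ℝ) ^ m) := by
      rw [Real.log_pow, Real.log_pow]; exact h1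
    have p1 : (0:ℝ) < (c₁:ℝ) ^ n := by positivity
    have p2 : (0:ℝ) < (c₂:ℝ) ^ m := by positivity
    exact Real.log_injOn_pos (Set.mem_Ioi.mpr p1) (Set.mem_Ioi.mpr p2) h2
  have keyN : c₁ ^ n = c₂ ^ m := by exact_mod_cast key
  have keyQ : (c₁:ℚ) ^ n = (c₂:ℚ) ^ m := by exact_mod_cast keyN
  have hcop : n.Coprime m := by
    have := q.reduced
    have hma : q.num.natAbs = m := by
      have := Rat.num_pos.mpr hqpos'
      omega
    rw [← hma]
    exact (Nat.coprime_comm.mp this)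
  obtain ⟨c, hc1, hc2⟩ := (pow_eq_pow_iff_of_coprime hcop).mp keyQ
  -- c is a positive rational with c ^ m = c₁ ∈ ℕ, hence an integer
  have hcden : c.den = 1 := by
    have : (c ^ m).den = 1 := by rw [← hc1]; simp
    rw [Rat.den_pow] at this
    exact (pow_eq_one_iff.mp this).resolve_right (by omega)
  have hcpos : 0 < c := by
    rcases lt_trichotomy c 0 with h | h | h
    · -- c < 0 : then m and n both even, contradicting coprimality
      have hme : Even m := by
        by_contra ho
        have : c ^ m < 0 := Odd.pow_neg ((Nat.even_or_odd m).resolve_left ho) h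
        rw [← hc1] at this
        have : (0:ℚ) < c₁ := by positivity
        linarith
      have hne : Even n := by
        by_contra ho
        have : c ^ n < 0 := Odd.pow_neg ((Nat.even_or_odd n).resolve_left ho) h
        rw [← hc2] at this
        have : (0:ℚ) < c₂ := by positivity
        linarith
      have := hcop
      rw [Nat.even_iff] at hme hne
      have h2 : 2 ∣ Nat.gcd n m := Nat.dvd_gcd (by omega) (by omega)
      rw [Nat.Coprime] at this
      omega
    · exfalso
      rw [h, zero_pow (by omega : m ≠ 0)] at hc1
      norm_cast at hc1
      omega
    · exact h
  have hcnum : 0 < c.num := Rat.num_pos.mpr hcpos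
  have hc' : ((c.num.toNat : ℕ) : ℚ) = c := by
    rw [← Rat.num_div_den c, hcden]
    push_cast [Int.toNat_of_nonneg hcnum.le]
    simp
    exact_mod_cast congrArg (fun z : ℤ => (z : ℚ)) (Int.toNat_of_nonneg hcnum.le)
  refine ⟨c.num.toNat, m, n, by omega, hm0, hn0, ?_, ?_⟩
  · have : (c₁:ℚ) = ((c.num.toNat : ℕ):ℚ) ^ m := by rw [hc1, hc']
    exact_mod_cast this
  · have : (c₂:ℚ) = ((c.num.toNat : ℕ):ℚ) ^ n := by rw [hc2, hc']
    exact_mod_cast this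
end

section
/- Let η ∈ ℝ^{c₂} be positive satisfying equation (4): η_{⌊q/c₂⌋} η_{q mod c₂} = η_{⌊q/c₁⌋} η_{q mod c₁} for 0 ≤ q < c₁c₂, with D = gcd(c₁, c₂) < c₁, k₁ = c₁/D, k₂ = c₂/D. Define a₀ = η_{β₀}/η_{α₀} where α₀ c₂ = β₀ c₁ + D. Then the block vectors η⃗_r = (η_{rD},...,η_{rD+D-1}) satisfy η⃗_r = a₀^{-r} η⃗_0 for all 0 ≤ r < k₂, and moreover a₀ = 1, so all blocks η⃗_r are equal. -/
set_option maxHeartbeats 1600000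


/-- Relations (10)–(15) of Lemma 1: the D-blocks of η satisfy η⃗_r = a₀^{-r} η⃗_0,
and moreover a₀ = 1, so all blocks coincide. -/
theorem stmt_13 (c₁ c₂ D k₁ k₂ α₀ β₀ : ℕ) (a₀ : ℝ)
    (hc₁ : 1 < c₁) (hc₁₂ : c₁ < c₂)
    (hD : Nat.gcd c₁ c₂ = D) (hDlt : D < c₁) (hk₁ : k₁ = c₁ / D) (hk₂ : k₂ = c₂ / D)
    (hα₀pos : 0 < α₀) (hα₀ : α₀ < k₁) (hβ₀ : β₀ < k₂)
    (hbez : α₀ * c₂ = β₀ * c₁ + D)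
    (η : ℕ → ℝ) (hηpos : ∀ j < c₂, 0 < η j)
    (hcomm : ∀ q < c₁ * c₂, η (q / c₂) * η (q % c₂) = η (q / c₁) * η (q % c₁))
    (ha₀ : a₀ = η β₀ / η α₀) :
    a₀ = 1 ∧ ∀ r < k₂, ∀ j < D, η (r * D + j) = a₀⁻¹ ^ r * η j := by
  -- basic numerical facts
  have hDpos : 0 < D := hD ▸ Nat.gcd_pos_of_pos_left c₂ (by omega)
  have hD1 : D ∣ c₁ := hD ▸ Nat.gcd_dvd_left _ _
  have hD2 : D ∣ c₂ := hD ▸ Nat.gcd_dvd_right _ _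
  have hc₁eq : c₁ = k₁ * D := by rw [hk₁, Nat.div_mul_cancel hD1]
  have hc₂eq : c₂ = k₂ * D := by rw [hk₂, Nat.div_mul_cancel hD2]
  have hk₁2 : 2 ≤ k₁ := by nlinarith
  have hk₁lt : k₁ < k₂ := by nlinarith
  have hk₁le : k₁ ≤ c₁ := by nlinarith
  have hk₂le : k₂ ≤ c₂ := by nlinarith
  have h2D : 2 * D ≤ c₁ := by nlinarith
  -- division/mod helpers
  have hdiv : ∀ a b n : ℕ, b < n → (n * a + b) / n = a := by
    intro a b n h
    rw [Nat.mul_add_div (by omega), Nat.div_eq_of_lt h, add_zero]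
  have hmod : ∀ a b n : ℕ, b < n → (n * a + b) % n = b := by
    intro a b n h
    rw [Nat.mul_add_mod, Nat.mod_eq_of_lt h]
  -- positivity
  have hηα₀ : 0 < η α₀ := hηpos _ (by omega)
  have hηβ₀ : 0 < η β₀ := hηpos _ (by omega)
  have ha₀pos : 0 < a₀ := ha₀ ▸ div_pos hηβ₀ hηα₀
  -- Step S2 : basic shift relation below c₁
  have S2 : ∀ j, j + D < c₁ → η α₀ * η j = η β₀ * η (j + D) := by
    intro j hj
    have hqlt : α₀ * c₂ + j < c₁ * c₂ := by nlinarith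
    have h := hcomm (α₀ * c₂ + j) hqlt
    have e1 : α₀ * c₂ + j = c₂ * α₀ + j := by ring
    have e2 : α₀ * c₂ + j = c₁ * β₀ + (j + D) := by
      rw [mul_comm c₁ β₀]; omega
    rw [e1, hdiv α₀ j c₂ (by omega), hmod α₀ j c₂ (by omega)] at h
    rw [← e1, e2, hdiv β₀ (j + D) c₁ (by omega), hmod β₀ (j + D) c₁ (by omega)] at h
    exact h
  -- Step S1 : CRT transfer of D-shift ratios
  have S1 : ∀ j u, j + D < c₂ → u + D < c₁ → j % D = u % D →
      η (j + D) * η u = η (u + D) * η j := by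
    intro j u hj hu hju
    have hmodeq : j ≡ u [MOD Nat.gcd c₂ c₁] := by
      rw [Nat.gcd_comm, hD]; exact hju
    obtain ⟨k, hk2, hk1⟩ := Nat.chineseRemainder' hmodeq
    have hck : c₂ * k₁ = c₁ * k₂ := by rw [hc₁eq, hc₂eq]; ring
    have hckpos : 0 < c₂ * k₁ := Nat.mul_pos (by omega) (by omega)
    obtain ⟨q, hqdef⟩ : ∃ q, q = k % (c₂ * k₁) := ⟨_, rfl⟩
    have hq2 : q % c₂ = j := by
      rw [hqdef, Nat.mod_mod_of_dvd k (dvd_mul_right c₂ k₁)]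
      have := hk2.symm
      unfold Nat.ModEq at this
      rw [← this, Nat.mod_eq_of_lt (by omega)]
    have hq1 : q % c₁ = u := by
      rw [hqdef, Nat.mod_mod_of_dvd k (hck ▸ dvd_mul_right c₁ k₂)]
      have := hk1.symm
      unfold Nat.ModEq at this
      rw [← this, Nat.mod_eq_of_lt (by omega)]
    have hqL : q < c₂ * k₁ := hqdef ▸ Nat.mod_lt _ hckpos
    obtain ⟨A, hA⟩ : ∃ A, q / c₂ = A := ⟨_, rfl⟩
    obtain ⟨B, hB⟩ : ∃ B, q / c₁ = B := ⟨_, rfl⟩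
    have hqA : q = c₂ * A + j := by
      have h := Nat.div_add_mod q c₂
      rw [hA, hq2] at h
      omega
    have hqB : q = c₁ * B + u := by
      have h := Nat.div_add_mod q c₁
      rw [hB, hq1] at h
      omega
    have hAlt : A < k₁ := hA ▸ Nat.div_lt_of_lt_mul hqL
    have hstep : c₂ * (A + 1) ≤ c₂ * c₁ := Nat.mul_le_mul (Nat.le_refl c₂) (by omega)
    have hexp : c₂ * (A + 1) = c₂ * A + c₂ := by ring
    have hcc : c₂ * c₁ = c₁ * c₂ := by ring
    have hqDlt : q + D < c₁ * c₂ := by omega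
    have hqlt : q < c₁ * c₂ := by omega
    have hBlt : B < c₂ := hB ▸ Nat.div_lt_of_lt_mul hqlt
    have h1 := hcomm q hqlt
    have h2 := hcomm (q + D) hqDlt
    have eA : q + D = c₂ * A + (j + D) := by omega
    have eB : q + D = c₁ * B + (u + D) := by omega
    rw [hA, hB, hq2, hq1] at h1
    rw [eA, hdiv A (j + D) c₂ (by omega), hmod A (j + D) c₂ (by omega)] at h2
    rw [← eA, eB, hdiv B (u + D) c₁ (by omega), hmod B (u + D) c₁ (by omega)] at h2
    -- h1 : η A * η j = η B * η u ; h2 : η A * η (j+D) = η B * η (u+D)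
    have hηA : 0 < η A := hηpos _ (by omega)
    have key : η A * (η (j + D) * η u) = η A * (η (u + D) * η j) := by
      linear_combination η u * h2 - η (u + D) * h1
    exact mul_left_cancel₀ (ne_of_gt hηA) key
  -- Step S3 : the D-shift relation on all of [0, c₂)
  have S3 : ∀ j, j + D < c₂ → η (j + D) = a₀⁻¹ * η j := by
    intro j hj
    have hjm : j % D < D := Nat.mod_lt _ hDpos
    have h1 := S1 j (j % D) hj (by omega)
      (by rw [Nat.mod_mod_of_dvd j dvd_rfl])
    have h2 := S2 (j % D) (by omega)
    have hηm : 0 < η (j % D) := hηpos _ (by omega)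
    have hηj : 0 < η j := hηpos _ (by omega)
    have key : η (j + D) * η β₀ * η (j % D) = η α₀ * η j * η (j % D) := by
      linear_combination η β₀ * h1 - η j * h2
    have key2 : η (j + D) * η β₀ = η α₀ * η j :=
      mul_right_cancel₀ (ne_of_gt hηm) key
    rw [ha₀, inv_div, div_mul_eq_mul_div, eq_div_iff (ne_of_gt hηβ₀)]
    linarith [key2]
  -- block formula
  have hblock : ∀ r j, j < D → r * D + j < c₂ → η (r * D + j) = a₀⁻¹ ^ r * η j := by
    intro r
    induction r with
    | zero => intro j _ _; simp
    | succ n ih =>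
      intro j hjD hlt
      have e1 : (n + 1) * D + j = (n * D + j) + D := by ring
      rw [e1, S3 _ (by omega), ih j hjD (by omega)]
      ring
  -- closing relations
  have hη0 : 0 < η 0 := hηpos 0 (by omega)
  have hη1 : 0 < η 1 := hηpos 1 (by omega)
  -- relation at q = c₁ : η 1 = a₀⁻¹^k₁ * η 0
  have h3 := hcomm c₁ (by nlinarith)
  rw [Nat.div_eq_of_lt (by omega), Nat.mod_eq_of_lt (by omega),
    Nat.div_self (by omega : 0 < c₁), Nat.mod_self] at h3
  -- h3 : η 0 * η c₁ = η 1 * η 0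
  have hc₁block : η c₁ = a₀⁻¹ ^ k₁ * η 0 := by
    have := hblock k₁ 0 hDpos (by omega)
    rw [show k₁ * D + 0 = c₁ by omega] at this
    exact this
  have hA1 : η 1 = a₀⁻¹ ^ k₁ * η 0 := by
    have : η c₁ * η 0 = η 1 * η 0 := by linarith [h3]
    have h4 := mul_right_cancel₀ (ne_of_gt hη0) this
    rw [← h4]; exact hc₁block
  -- relations at q = c₂ and q = c₂ - D
  set e := c₂ / c₁ with he
  set m := c₂ % c₁ with hm
  have hdm : c₂ = c₁ * e + m := by
    rw [he, hm]; exact (Nat.div_add_mod c₂ c₁).symm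
  have hmlt : m < c₁ := Nat.mod_lt _ (by omega)
  have hmne : m ≠ 0 := by
    intro h
    have hdvd : c₁ ∣ c₂ := Nat.dvd_of_mod_eq_zero h
    have := Nat.gcd_eq_left hdvd
    omega
  have hDm : D ∣ m := (Nat.dvd_mod_iff hD1).mpr hD2
  have hDmle : D ≤ m := Nat.le_of_dvd (Nat.pos_of_ne_zero hmne) hDm
  have helt : e < c₂ := by nlinarith
  have h2 := hcomm c₂ (by nlinarith)
  rw [Nat.div_self (by omega : 0 < c₂), Nat.mod_self, ← he, ← hm] at h2
  -- h2 : η 1 * η 0 = η e * η m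
  have h1q := hcomm (c₂ - D) (by
    have h9 : c₂ < c₁ * c₂ := by nlinarith
    omega)
  have edm : c₂ - D = c₁ * e + (m - D) := by omega
  rw [Nat.div_eq_of_lt (by omega), Nat.mod_eq_of_lt (by omega)] at h1q
  rw [edm, hdiv e (m - D) c₁ (by omega), hmod e (m - D) c₁ (by omega), ← edm] at h1q
  -- h1q : η 0 * η (c₂ - D) = η e * η (m - D)
  have hS3m : η m = a₀⁻¹ * η (m - D) := by
    have := S3 (m - D) (by omega)
    rw [show m - D + D = m by omega] at this
    exact this
  have htop : η (c₂ - D) = a₀⁻¹ ^ (k₂ - 1) * η 0 := by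
    have hi : (k₂ - 1) * D + 0 = c₂ - D := by
      have : (k₂ - 1) * D = k₂ * D - D := by
        rw [Nat.sub_mul, one_mul]
      omega
    have := hblock (k₂ - 1) 0 hDpos (by omega)
    rw [hi] at this
    exact this
  have hpow : a₀⁻¹ * a₀⁻¹ ^ (k₂ - 1) = a₀⁻¹ ^ k₂ := by
    rw [← pow_succ']
    congr 1
    omega
  have hB1 : η 1 = a₀⁻¹ ^ k₂ * η 0 := by
    have key : η 1 * η 0 = (a₀⁻¹ ^ k₂ * η 0) * η 0 := by
      calc η 1 * η 0 = η e * η m := h2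
        _ = a₀⁻¹ * (η e * η (m - D)) := by rw [hS3m]; ring
        _ = a₀⁻¹ * (η 0 * η (c₂ - D)) := by rw [← h1q]
        _ = a₀⁻¹ * (η 0 * (a₀⁻¹ ^ (k₂ - 1) * η 0)) := by rw [htop]
        _ = (a₀⁻¹ ^ k₂ * η 0) * η 0 := by rw [← hpow]; ring
    exact mul_right_cancel₀ (ne_of_gt hη0) key
  have hinv : a₀⁻¹ ^ k₁ = a₀⁻¹ ^ k₂ := by
    have h5 : a₀⁻¹ ^ k₁ * η 0 = a₀⁻¹ ^ k₂ * η 0 := by rw [← hA1, ← hB1]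
    exact mul_right_cancel₀ (ne_of_gt hη0) h5
  have ha₀invpos : 0 < a₀⁻¹ := inv_pos.mpr ha₀pos
  have ha₀1 : a₀ = 1 := by
    have hi1 : a₀⁻¹ = 1 := by
      by_contra h
      rcases lt_or_gt_of_ne h with hlt | hgt
      · have := pow_lt_pow_right_of_lt_one₀ ha₀invpos hlt hk₁lt
        linarith [hinv]
      · have := pow_lt_pow_right₀ hgt hk₁lt
        linarith [hinv]
    have := inv_eq_one.mp hi1
    exact this
  refine ⟨ha₀1, ?_⟩
  intro r hr j hj
  exact hblock r j hj (by nlinarith)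
end

section
/- Suppose b : {1,...,N} → ℝ_{>0} and positive reals U, V satisfy: b_p = b_{p mod c₁} when p mod c₁ ≠ 0, b_p = V^{-1} b_{p/c₁} when c₁ ∣ p, b_p = b_{p mod (c₂/c₁)} when p mod (c₂/c₁) ≠ 0, and b_p = U b_{p c₁ / c₂} when (c₂/c₁) ∣ p, for 1 ≤ p < c₂, where c₂ = c₁^{r₁} c₂' with r₁ ≥ 1 and gcd(c₂', c₁) < min(c₂', c₁), c₂' > 1. Then U b_α = V^{1 - r₁} b_{(α c₂') mod c₁} for all valid α. -/
/-- Chained identity (29) of Molchan's paper derived from equations (28a)–(28d). -/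
theorem stmt_14 (c₁ c₂ c₂' r₁ : ℕ) (hc₁ : 1 < c₁) (hc₂' : 1 < c₂') (hr₁ : 1 ≤ r₁)
    (hc₂ : c₂ = c₁ ^ r₁ * c₂') (h₁ : ¬ c₁ ∣ c₂') (h₂ : ¬ c₂' ∣ c₁)
    (b : ℕ → ℝ) (hbpos : ∀ p, 1 ≤ p → p < c₂ → 0 < b p)
    (U V : ℝ) (hU : 0 < U) (hV : 0 < V)
    (h28a : ∀ p, 1 ≤ p → p < c₂ → p % c₁ ≠ 0 → b p = b (p % c₁))
    (h28b : ∀ p, 1 ≤ p → p < c₂ → c₁ ∣ p → b p = V⁻¹ * b (p / c₁))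
    (h28c : ∀ p, 1 ≤ p → p < c₂ → p % (c₂ / c₁) ≠ 0 → b p = b (p % (c₂ / c₁)))
    (h28d : ∀ p, 1 ≤ p → p < c₂ → (c₂ / c₁) ∣ p → b p = U * b (p * c₁ / c₂)) :
    ∀ α, 1 ≤ α → α < c₁ → (α * c₂') % c₁ ≠ 0 →
      U * b α = V ^ ((1 : ℤ) - (r₁ : ℤ)) * b ((α * c₂') % c₁) := by
  intro α hα1 hαc₁ hmod
  have hc₁0 : 0 < c₁ := by omega
  have hpow : c₁ ^ r₁ = c₁ * c₁ ^ (r₁ - 1) := by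
    conv_lhs => rw [show r₁ = (r₁ - 1) + 1 by omega]
    ring
  have hdiv : c₂ / c₁ = c₁ ^ (r₁ - 1) * c₂' := by
    rw [hc₂, hpow, mul_assoc, Nat.mul_div_cancel_left _ hc₁0]
  -- chained application of (28b)
  have key : ∀ k, k ≤ r₁ - 1 → b (α * c₂' * c₁ ^ k) = (V⁻¹) ^ k * b (α * c₂') := by
    intro k
    induction k with
    | zero => intro _; simp
    | succ k ih =>
      intro hk
      have hlt : α * c₂' * c₁ ^ (k + 1) < c₂ := by
        rw [hc₂]
        calc α * c₂' * c₁ ^ (k + 1) < c₁ * c₂' * c₁ ^ (k + 1) :=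
              (Nat.mul_lt_mul_right (Nat.pow_pos hc₁0)).mpr
                ((Nat.mul_lt_mul_right (by omega)).mpr hαc₁)
          _ = c₁ ^ (k + 2) * c₂' := by ring
          _ ≤ c₁ ^ r₁ * c₂' := by
              exact Nat.mul_le_mul_right _ (Nat.pow_le_pow_right (by omega) (by omega))
      have h1 : 1 ≤ α * c₂' * c₁ ^ (k + 1) :=
        Nat.one_le_iff_ne_zero.mpr (by positivity)
      have hdvd : c₁ ∣ α * c₂' * c₁ ^ (k + 1) := ⟨α * c₂' * c₁ ^ k, by ring⟩
      have hq : α * c₂' * c₁ ^ (k + 1) / c₁ = α * c₂' * c₁ ^ k := by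
        rw [pow_succ, ← mul_assoc, Nat.mul_div_cancel _ hc₁0]
      rw [h28b _ h1 hlt hdvd, hq, ih (by omega)]
      ring
  -- the pivot point p = α * (c₂ / c₁)
  set p := α * c₂' * c₁ ^ (r₁ - 1) with hp
  have hpdiv : p = α * (c₂ / c₁) := by rw [hdiv]; ring
  have hc₁dvd : c₁ ∣ c₂ := ⟨c₁ ^ (r₁ - 1) * c₂', by rw [hc₂, hpow]; ring⟩
  have hplt : p < c₂ := by
    rw [hpdiv]
    calc α * (c₂ / c₁) < c₁ * (c₂ / c₁) := by
          have hc₂0 : 0 < c₂ := by rw [hc₂]; positivity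
          exact (Nat.mul_lt_mul_right (Nat.div_pos (Nat.le_of_dvd hc₂0 hc₁dvd) hc₁0)).mpr hαc₁
      _ = c₂ := Nat.mul_div_cancel' hc₁dvd
  have hp1 : 1 ≤ p := Nat.one_le_iff_ne_zero.mpr (by rw [hp]; positivity)
  have hpdvd : (c₂ / c₁) ∣ p := ⟨α, by rw [hpdiv]; ring⟩
  have hpc : p * c₁ / c₂ = α := by
    rw [hpdiv, mul_assoc, Nat.div_mul_cancel hc₁dvd,
      Nat.mul_div_cancel _ (by rw [hc₂]; positivity)]
  have hd : b p = U * b α := by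
    have := h28d p hp1 hplt hpdvd
    rwa [hpc] at this
  have hk := key (r₁ - 1) le_rfl
  have hαc₂'lt : α * c₂' < c₂ := by
    rw [hc₂]
    calc α * c₂' < c₁ * c₂' := (Nat.mul_lt_mul_right (by omega)).mpr hαc₁
      _ ≤ c₁ ^ r₁ * c₂' := Nat.mul_le_mul_right _ (Nat.le_self_pow (by omega) _)
  have hαc₂'1 : 1 ≤ α * c₂' := Nat.one_le_iff_ne_zero.mpr (by positivity)
  have ha := h28a (α * c₂') hαc₂'1 hαc₂'lt hmod
  have hzpow : V ^ ((1 : ℤ) - (r₁ : ℤ)) = (V⁻¹) ^ (r₁ - 1) := by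
    have h : (1 : ℤ) - (r₁ : ℤ) = -((r₁ - 1 : ℕ) : ℤ) := by
      push_cast [Nat.cast_sub hr₁]; ring
    rw [h, zpow_neg, zpow_natCast, inv_pow]
  rw [← hd, hzpow, ← ha, ← hk, hp]
end

section
/- Let a, b : indices → ℝ_{>0}, V_a = E ξ_0²/(E ξ_0)², V_b = E η_0²/(E η_0)², with a_i defined for 1 ≤ i < c₁ and b_j for 1 ≤ j < c₂. Suppose the two interleaved sequences X = (V_b a⃗; b_1, V_b a⃗; ...; b_{c₂-1}, V_b a⃗) and Y = (V_a b⃗; a_1, V_a b⃗; ...; a_{c₁-1}, V_a b⃗) in ℝ^{c₁c₂ - 1} are equal. Then V_b a_i = V_a b_i for 1 ≤ i < c₁, and writing b̃_i = V_a b_i, the entries satisfy: X_r = b̃_{r mod c₁} if r mod c₁ ≠ 0 and X_r = V_a^{-1} b̃_{r/c₁} if c₁ ∣ r; similarly Y_r = b̃_{r mod c₂} if r mod c₂ ≠ 0 and Y_r = V_b^{-1} b̃_{r/c₂} if c₂ ∣ r. -/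
/-- The combinatorial core (24)–(25) of the proof of Molchan's theorem: equality of
the two interleaved vectors X and Y forces V_b a_i = V_a b_i for i < c₁, and the
entries of X and Y are given by formulas (24) and (25) in terms of b̃ = V_a b. -/
theorem stmt_19 (c₁ c₂ : ℕ) (hc₁ : 1 < c₁) (hc₁₂ : c₁ < c₂)
    (a b : ℕ → ℝ) (ha : ∀ i, 1 ≤ i → i < c₁ → 0 < a i) (hb : ∀ j, 1 ≤ j → j < c₂ → 0 < b j)
    (Va Vb : ℝ) (hVa : 0 < Va) (hVb : 0 < Vb)
    (X Y : ℕ → ℝ)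
    (hX : ∀ r, 1 ≤ r → r < c₁ * c₂ →
      X r = if r % c₁ = 0 then b (r / c₁) else Vb * a (r % c₁))
    (hY : ∀ r, 1 ≤ r → r < c₁ * c₂ →
      Y r = if r % c₂ = 0 then a (r / c₂) else Va * b (r % c₂))
    (hXY : ∀ r, 1 ≤ r → r < c₁ * c₂ → X r = Y r) :
    (∀ i, 1 ≤ i → i < c₁ → Vb * a i = Va * b i) ∧
    (∀ r, 1 ≤ r → r < c₁ * c₂ →
      (r % c₁ ≠ 0 → X r = Va * b (r % c₁)) ∧
      (r % c₁ = 0 → X r = Va⁻¹ * (Va * b (r / c₁))) ∧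
      (r % c₂ ≠ 0 → Y r = Va * b (r % c₂)) ∧
      (r % c₂ = 0 → Y r = Vb⁻¹ * (Va * b (r / c₂)))) := by
  have key : ∀ i, 1 ≤ i → i < c₁ → Vb * a i = Va * b i := by
    intro i h1 h2
    have hlt : i < c₁ * c₂ := lt_of_lt_of_le h2 (Nat.le_mul_of_pos_right c₁ (by omega))
    have hx := hX i h1 hlt
    have hy := hY i h1 hlt
    have hxy := hXY i h1 hlt
    have hi1 : i % c₁ = i := Nat.mod_eq_of_lt h2
    have hi2 : i % c₂ = i := Nat.mod_eq_of_lt (lt_trans h2 hc₁₂)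
    rw [hi1, if_neg (by omega)] at hx
    rw [hi2, if_neg (by omega)] at hy
    rw [hx, hy] at hxy
    exact hxy
  refine ⟨key, fun r h1 h2 => ⟨?_, ?_, ?_, ?_⟩⟩
  · intro hmod
    have hm1 : 1 ≤ r % c₁ := Nat.one_le_iff_ne_zero.mpr hmod
    have hm2 : r % c₁ < c₁ := Nat.mod_lt _ (by omega)
    rw [hX r h1 h2, if_neg hmod]
    exact key _ hm1 hm2
  · intro hmod
    rw [hX r h1 h2, if_pos hmod]
    field_simp
  · intro hmod
    rw [hY r h1 h2, if_neg hmod]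
  · intro hmod
    rw [hY r h1 h2, if_pos hmod]
    have hdvd : c₂ ∣ r := Nat.dvd_of_mod_eq_zero hmod
    have h1' : 1 ≤ r / c₂ := (Nat.one_le_div_iff (by omega)).mpr (Nat.le_of_dvd (by omega) hdvd)
    have h2' : r / c₂ < c₁ := (Nat.div_lt_iff_lt_mul (by omega)).mpr (by
      omega)
    have hk := key _ h1' h2'
    field_simp
    linarith
end
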